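/- arXiv:2406.19696 — 4 statements merged into one kernel-verified Lean document; each statement's English description precedes it below -/
import Mathlib

section
/- Assume q_0 = 0 and z_j > 0 for all j, and fix φ_0 ∈ ℝ. For α > φ_0 define the time-map T(α) = √2 ∫_{φ_0}^{α} (F(α) − F(φ))^{−1/2} dφ. Then T(α) is finite for every α > φ_0, T is strictly increasing on (φ_0, ∞), T(α) → 0 as α → φ_0⁺, and T(α) → +∞ as α → +∞. -/
/-!
`F` is increasing and concave (`F' = f > 0` is decreasing) and bounded above. The tangent-line
bound `F α - F φ ≥ f α * (α - φ)` dominates the integrand by a multiple of `(α - φ)^(-1/2)`,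
which gives finiteness and `T α = O(√(α - φ0))` as `α → φ0⁺`. The bound
`F α - F φ ≤ sup F - F φ0` makes `T` grow at least linearly. For monotonicity substitute
`φ = α - t`: by concavity the increment `F α - F (α - t)` decreases in `α`, so the integrand
increases with `α`, and so does the interval of integration `[0, α - φ0]`.
-/

open Real Filter Set Topology MeasureTheory

lemma one_div_sqrt_eqOn_rpow : EqOn (fun x : ℝ => 1 / √x) (fun x => x ^ (-(1 / 2) : ℝ)) (Ici 0) :=
  fun x hx => by simp only [rpow_neg (mem_Ici.1 hx), sqrt_eq_rpow, one_div]

lemma intervalIntegrable_one_div_sqrt {b : ℝ} (hb : 0 ≤ b) :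
    IntervalIntegrable (fun x => 1 / √x) volume 0 b :=
  (intervalIntegral.intervalIntegrable_rpow' (by norm_num)).congr
    (one_div_sqrt_eqOn_rpow.symm.mono fun x hx => by
      rw [uIoc_of_le hb] at hx; exact mem_Ici.2 hx.1.le)

lemma integral_one_div_sqrt {b : ℝ} (hb : 0 ≤ b) : ∫ x in 0..b, 1 / √x = 2 * √b := by
  rw [intervalIntegral.integral_congr (one_div_sqrt_eqOn_rpow.mono fun x hx => by
      rw [uIcc_of_le hb] at hx; exact mem_Ici.2 hx.1),
    integral_rpow (Or.inl (by norm_num)), zero_rpow (by norm_num), sqrt_eq_rpow]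
  norm_num
  ring

lemma intervalIntegrable_one_div_sqrt_sub {a b : ℝ} (hab : a ≤ b) :
    IntervalIntegrable (fun x => 1 / √(b - x)) volume a b := by
  simpa using ((intervalIntegrable_one_div_sqrt (sub_nonneg.2 hab)).comp_sub_left b).symm

lemma integral_one_div_sqrt_sub {a b : ℝ} (hab : a ≤ b) :
    ∫ x in a..b, 1 / √(b - x) = 2 * √(b - a) := by
  rw [intervalIntegral.integral_comp_sub_left (fun x => 1 / √x), sub_self,
    integral_one_div_sqrt (sub_nonneg.2 hab)]

noncomputable def timeMap (F : ℝ → ℝ) (φ0 α : ℝ) : ℝ :=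
  √2 * ∫ φ in φ0..α, 1 / √(F α - F φ)

section TimeMap

variable {F f : ℝ → ℝ} {φ0 α φ : ℝ}

lemma mul_sub_le_sub_of_hasDerivAt_of_antitone (hF : ∀ x, HasDerivAt F (f x) x)
    (hf_anti : Antitone f) (hφ : φ ≤ α) : f α * (α - φ) ≤ F α - F φ := by
  have hdiff : Differentiable ℝ F := fun x => (hF x).differentiableAt
  refine (convex_Icc φ α).mul_sub_le_image_sub_of_le_deriv hdiff.continuous.continuousOn
    hdiff.differentiableOn (fun x hx => ?_) φ (left_mem_Icc.2 hφ) α (right_mem_Icc.2 hφ) hφ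
  rw [interior_Icc] at hx
  rw [(hF x).deriv]
  exact hf_anti hx.2.le

lemma one_div_sqrt_sub_le (hF : ∀ x, HasDerivAt F (f x) x) (hf_anti : Antitone f) (hfα : 0 < f α)
    (hφ : φ ≤ α) : 1 / √(F α - F φ) ≤ 1 / √(f α) * (1 / √(α - φ)) := by
  rcases hφ.eq_or_lt with rfl | hφ
  · simp
  rw [one_div_mul_one_div, ← sqrt_mul hfα.le]
  exact one_div_le_one_div_of_le (sqrt_pos.2 (mul_pos hfα (sub_pos.2 hφ)))
    (sqrt_le_sqrt (mul_sub_le_sub_of_hasDerivAt_of_antitone hF hf_anti hφ.le))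

lemma intervalIntegrable_timeMap_integrand (hF : ∀ x, HasDerivAt F (f x) x) (hf_anti : Antitone f)
    (hfα : 0 < f α) (hφ0 : φ0 ≤ α) :
    IntervalIntegrable (fun φ => 1 / √(F α - F φ)) volume φ0 α := by
  have hFc : Continuous F := continuous_iff_continuousAt.2 fun x => (hF x).continuousAt
  refine ((intervalIntegrable_one_div_sqrt_sub hφ0).const_mul (1 / √(f α))).mono_fun'
    (Measurable.aestronglyMeasurable (by fun_prop (disch := exact hFc.measurable)))
    (ae_restrict_of_forall_mem measurableSet_uIoc fun φ hφ => ?_)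
  rw [uIoc_of_le hφ0] at hφ
  show ‖1 / √(F α - F φ)‖ ≤ 1 / √(f α) * (1 / √(α - φ))
  rw [norm_of_nonneg (by positivity)]
  exact one_div_sqrt_sub_le hF hf_anti hfα hφ.2

lemma integral_timeMap_integrand_le (hF : ∀ x, HasDerivAt F (f x) x) (hf_anti : Antitone f)
    (hfα : 0 < f α) (hφ0 : φ0 ≤ α) :
    ∫ φ in φ0..α, 1 / √(F α - F φ) ≤ 2 * √(α - φ0) / √(f α) :=
  calc ∫ φ in φ0..α, 1 / √(F α - F φ)
      ≤ ∫ φ in φ0..α, 1 / √(f α) * (1 / √(α - φ)) :=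
        intervalIntegral.integral_mono_on hφ0
          (intervalIntegrable_timeMap_integrand hF hf_anti hfα hφ0)
          ((intervalIntegrable_one_div_sqrt_sub hφ0).const_mul _)
          fun φ hφ => one_div_sqrt_sub_le hF hf_anti hfα hφ.2
    _ = 2 * √(α - φ0) / √(f α) := by
        rw [intervalIntegral.integral_const_mul, integral_one_div_sqrt_sub hφ0]
        ring

lemma le_integral_timeMap_integrand {B : ℝ} (hF_mono : StrictMono F) (hB : ∀ x, F x ≤ B)
    (hφ0 : φ0 ≤ α) (hint : IntervalIntegrable (fun φ => 1 / √(F α - F φ)) volume φ0 α) :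
    (α - φ0) / √(B - F φ0) ≤ ∫ φ in φ0..α, 1 / √(F α - F φ) := by
  have h := intervalIntegral.integral_mono_on_of_le_Ioo hφ0 intervalIntegrable_const hint
    fun φ hφ => one_div_le_one_div_of_le (sqrt_pos.2 (sub_pos.2 (hF_mono hφ.2)))
      (sqrt_le_sqrt (show F α - F φ ≤ B - F φ0 by linarith [hB α, hF_mono.monotone hφ.1.le]))
  rwa [intervalIntegral.integral_const, smul_eq_mul, mul_one_div] at h

lemma antitone_sub_comp_sub (hF : ∀ x, HasDerivAt F (f x) x) (hf_anti : Antitone f) {t : ℝ}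
    (ht : 0 ≤ t) : Antitone fun x => F x - F (x - t) := by
  have hG : ∀ x, HasDerivAt (fun x => F x - F (x - t)) (f x - f (x - t)) x := fun x =>
    (hF x).sub ((hF (x - t)).comp_sub_const x t)
  exact antitone_of_deriv_nonpos (fun x => (hG x).differentiableAt) fun x => by
    rw [(hG x).deriv]
    exact sub_nonpos.2 (hf_anti (by linarith))

lemma strictMonoOn_integral_timeMap_integrand (hF : ∀ x, HasDerivAt F (f x) x)
    (hf_pos : ∀ x, 0 < f x) (hf_anti : Antitone f) :
    StrictMonoOn (fun α => ∫ φ in φ0..α, 1 / √(F α - F φ)) (Ioi φ0) := by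
  intro a ha b hb hab
  rw [mem_Ioi] at ha hb
  have hFm : StrictMono F := strictMono_of_hasDerivAt_pos hF hf_pos
  have hsub : ∀ α, ∫ φ in φ0..α, 1 / √(F α - F φ) = ∫ t in 0..α - φ0, 1 / √(F α - F (α - t)) :=
    fun α => by rw [intervalIntegral.integral_comp_sub_left (fun φ => 1 / √(F α - F φ))]; simp
  have hint : ∀ α, φ0 < α →
      IntervalIntegrable (fun t => 1 / √(F α - F (α - t))) volume 0 (α - φ0) := fun α hα => by
    simpa using
      ((intervalIntegrable_timeMap_integrand hF hf_anti (hf_pos α) hα.le).comp_sub_left α).symm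
  have hmid : a - φ0 ∈ uIcc 0 (b - φ0) := mem_uIcc_of_le (by linarith) (by linarith)
  have hleft := (hint b hb).mono_set (uIcc_subset_uIcc_left hmid)
  have hright := (hint b hb).mono_set (uIcc_subset_uIcc_right hmid)
  calc ∫ φ in φ0..a, 1 / √(F a - F φ)
      = ∫ t in 0..a - φ0, 1 / √(F a - F (a - t)) := hsub a
    _ ≤ ∫ t in 0..a - φ0, 1 / √(F b - F (b - t)) :=
        intervalIntegral.integral_mono_on_of_le_Ioo (by linarith) (hint a ha) hleft
          fun t ht => one_div_le_one_div_of_le (sqrt_pos.2 (sub_pos.2 (hFm (by linarith [ht.1]))))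
            (sqrt_le_sqrt (antitone_sub_comp_sub hF hf_anti ht.1.le hab.le))
    _ < (∫ t in 0..a - φ0, 1 / √(F b - F (b - t))) +
          ∫ t in a - φ0..b - φ0, 1 / √(F b - F (b - t)) :=
        lt_add_of_pos_right _ <| intervalIntegral.intervalIntegral_pos_of_pos_on hright
          (fun t ht => one_div_pos.2 (sqrt_pos.2 (sub_pos.2 (hFm (by linarith [ht.1])))))
          (by linarith)
    _ = ∫ t in 0..b - φ0, 1 / √(F b - F (b - t)) :=
        intervalIntegral.integral_add_adjacent_intervals hleft hright
    _ = ∫ φ in φ0..b, 1 / √(F b - F φ) := (hsub b).symm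

lemma strictMonoOn_timeMap (hF : ∀ x, HasDerivAt F (f x) x) (hf_pos : ∀ x, 0 < f x)
    (hf_anti : Antitone f) : StrictMonoOn (timeMap F φ0) (Ioi φ0) := fun _ ha _ hb hab =>
  mul_lt_mul_of_pos_left (strictMonoOn_integral_timeMap_integrand hF hf_pos hf_anti ha hb hab)
    (by positivity)

lemma tendsto_timeMap_nhdsGT (hF : ∀ x, HasDerivAt F (f x) x) (hf_pos : ∀ x, 0 < f x)
    (hf_anti : Antitone f) : Tendsto (timeMap F φ0) (𝓝[>] φ0) (𝓝 0) := by
  have hbound : Tendsto (fun α => √2 * (2 * √(α - φ0) / √(f (φ0 + 1)))) (𝓝[>] φ0) (𝓝 0) := by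
    have : ContinuousAt (fun α => √2 * (2 * √(α - φ0) / √(f (φ0 + 1)))) φ0 := by fun_prop
    simpa using this.tendsto.mono_left nhdsWithin_le_nhds
  refine tendsto_of_tendsto_of_tendsto_of_le_of_le' tendsto_const_nhds hbound ?_ ?_
  · filter_upwards [self_mem_nhdsWithin] with α hα
    exact mul_nonneg (sqrt_nonneg 2)
      (intervalIntegral.integral_nonneg (le_of_lt hα) fun _ _ => by positivity)
  · filter_upwards [Ioo_mem_nhdsGT (lt_add_one φ0)] with α hα
    refine mul_le_mul_of_nonneg_left ?_ (sqrt_nonneg 2)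
    calc ∫ φ in φ0..α, 1 / √(F α - F φ) ≤ 2 * √(α - φ0) / √(f α) :=
          integral_timeMap_integrand_le hF hf_anti (hf_pos α) hα.1.le
      _ ≤ 2 * √(α - φ0) / √(f (φ0 + 1)) := by
          have := hf_pos (φ0 + 1)
          gcongr
          exact hf_anti hα.2.le

lemma tendsto_timeMap_atTop {B : ℝ} (hF : ∀ x, HasDerivAt F (f x) x) (hf_pos : ∀ x, 0 < f x)
    (hf_anti : Antitone f) (hB : ∀ x, F x ≤ B) : Tendsto (timeMap F φ0) atTop atTop := by
  have hFm : StrictMono F := strictMono_of_hasDerivAt_pos hF hf_pos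
  have hB0 : 0 < √(B - F φ0) := sqrt_pos.2 (by linarith [hFm (lt_add_one φ0), hB (φ0 + 1)])
  have hlin : Tendsto (fun α => √2 * ((α - φ0) / √(B - F φ0))) atTop atTop :=
    ((tendsto_atTop_add_const_right _ (-φ0) tendsto_id).atTop_div_const hB0).const_mul_atTop
      (by positivity)
  refine tendsto_atTop_mono' _ ?_ hlin
  filter_upwards [eventually_ge_atTop φ0] with α hα
  exact mul_le_mul_of_nonneg_left (le_integral_timeMap_integrand hFm hB hα
    (intervalIntegrable_timeMap_integrand hF hf_anti (hf_pos α) hα)) (sqrt_nonneg 2)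

end TimeMap

section ExpSum

variable {ι : Type*} [Fintype ι] (z c : ι → ℝ)

lemma hasDerivAt_neg_sum_mul_exp (x : ℝ) :
    HasDerivAt (fun φ => -∑ j, c j * exp (-(z j) * φ)) (∑ j, z j * c j * exp (-(z j) * x)) x := by
  refine (HasDerivAt.fun_sum fun j _ =>
    (((hasDerivAt_id x).const_mul (-(z j))).exp).const_mul (c j)).neg.congr_deriv ?_
  rw [← Finset.sum_neg_distrib]
  exact Finset.sum_congr rfl fun j _ => by simp only [id]; ring

lemma sum_mul_exp_pos [Nonempty ι] (hz : ∀ j, 0 < z j) (hc : ∀ j, 0 < c j) (x : ℝ) :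
    0 < ∑ j, z j * c j * exp (-(z j) * x) :=
  Finset.sum_pos (fun j _ => by have := hz j; have := hc j; positivity) Finset.univ_nonempty

lemma antitone_sum_mul_exp (hz : ∀ j, 0 ≤ z j) (hc : ∀ j, 0 ≤ c j) :
    Antitone fun x => ∑ j, z j * c j * exp (-(z j) * x) := fun x y hxy =>
  Finset.sum_le_sum fun j _ => mul_le_mul_of_nonneg_left
    (exp_le_exp.2 (by nlinarith [hz j])) (mul_nonneg (hz j) (hc j))

lemma neg_sum_mul_exp_nonpos (hc : ∀ j, 0 ≤ c j) (x : ℝ) : -∑ j, c j * exp (-(z j) * x) ≤ 0 :=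
  neg_nonpos.2 (Finset.sum_nonneg fun j _ => mul_nonneg (hc j) (exp_pos _).le)

end ExpSum

theorem stmt5_general {N : ℕ} (hN : 1 ≤ N) (z c : Fin N → ℝ)
    (hc : ∀ j, 0 < c j) (q0 : ℝ)
    (F : ℝ → ℝ)
    (hF : ∀ φ : ℝ, F φ = q0 * φ - ∑ j, c j * Real.exp (-(z j) * φ))
    (hq0 : q0 = 0) (hzpos : ∀ j, 0 < z j)
    (φ0 : ℝ)
    (T : ℝ → ℝ)
    (hT : ∀ α : ℝ, T α = Real.sqrt 2 * ∫ φ in φ0..α, 1 / Real.sqrt (F α - F φ)) :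
    (∀ α : ℝ, φ0 < α →
      IntervalIntegrable (fun φ => 1 / Real.sqrt (F α - F φ)) volume φ0 α) ∧
    StrictMonoOn T (Set.Ioi φ0) ∧
    Tendsto T (𝓝[>] φ0) (𝓝 0) ∧
    Tendsto T atTop atTop := by
  have : Nonempty (Fin N) := Fin.pos_iff_nonempty.mp hN
  obtain rfl : F = fun φ => -∑ j, c j * exp (-(z j) * φ) := funext fun φ => by simp [hF, hq0]
  obtain rfl : T = timeMap _ φ0 := funext hT
  have hderiv := hasDerivAt_neg_sum_mul_exp z c
  have hpos := sum_mul_exp_pos z c hzpos hc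
  have hanti := antitone_sum_mul_exp z c (fun j => (hzpos j).le) fun j => (hc j).le
  exact ⟨fun α hα => intervalIntegrable_timeMap_integrand hderiv hanti (hpos α) hα.le,
    strictMonoOn_timeMap hderiv hpos hanti, tendsto_timeMap_nhdsGT hderiv hpos hanti,
    tendsto_timeMap_atTop hderiv hpos hanti (neg_sum_mul_exp_nonpos z c fun j => (hc j).le)⟩

/-- In the equilibrium-at-infinity case (`q0 = 0`, all `z j > 0`), with fixed
`φ0`, the time-map `T(α) = √2 ∫_{φ0}^{α} (F(α) - F(φ))^{-1/2} dφ` is finite for each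
`α > φ0`, strictly increasing on `(φ0, ∞)`, tends to `0` as `α → φ0⁺`,
and tends to `+∞` as `α → +∞`. -/
theorem stmt5 {N : ℕ} (hN : 1 ≤ N) (z c : Fin N → ℝ)
    (hz : ∀ j, z j ≠ 0) (hc : ∀ j, 0 < c j) (q0 : ℝ)
    (f F : ℝ → ℝ)
    (hf : ∀ φ : ℝ, f φ = q0 + ∑ j, z j * c j * Real.exp (-(z j) * φ))
    (hF : ∀ φ : ℝ, F φ = q0 * φ - ∑ j, c j * Real.exp (-(z j) * φ))
    (hq0 : q0 = 0) (hzpos : ∀ j, 0 < z j)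
    (φ0 : ℝ)
    (T : ℝ → ℝ)
    (hT : ∀ α : ℝ, T α = Real.sqrt 2 * ∫ φ in φ0..α, 1 / Real.sqrt (F α - F φ)) :
    (∀ α : ℝ, φ0 < α →
      IntervalIntegrable (fun φ => 1 / Real.sqrt (F α - F φ)) volume φ0 α) ∧
    StrictMonoOn T (Set.Ioi φ0) ∧
    Tendsto T (𝓝[>] φ0) (𝓝 0) ∧
    Tendsto T atTop atTop :=
  stmt5_general hN z c hc q0 F hF hq0 hzpos φ0 T hT
end

section
/- Let α ∈ ℝ with f(α) < 0, let σ > 0, and let φ_s > α satisfy σ²/2 + F(φ_s) = F(α). Then 0 < σ²/(−2 f(φ_s)) < φ_s − α < σ²/(−2 f(α)). -/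
open Real Filter Set Topology

/-! Since `F' = f` and `f` is strictly decreasing, the mean value theorem gives
`F(φ_s) - F(α) = f(ξ) (φ_s - α)` with `f(φ_s) < f(ξ) < f(α) < 0`; as `F(φ_s) - F(α) = -σ²/2`,
dividing by `-2 f(φ_s)` and `-2 f(α)` yields the two bounds. -/

lemma strictAnti_mul_exp_neg_mul {z : ℝ} (hz : z ≠ 0) {c : ℝ} (hc : 0 < c) :
    StrictAnti fun φ : ℝ => z * c * exp (-z * φ) := by
  intro a b hab
  rcases hz.lt_or_gt with hz | hz
  · have hexp : exp (-z * a) < exp (-z * b) := exp_lt_exp.2 (by nlinarith)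
    exact mul_lt_mul_of_neg_left hexp (mul_neg_of_neg_of_pos hz hc)
  · have hexp : exp (-z * b) < exp (-z * a) := exp_lt_exp.2 (by nlinarith)
    exact mul_lt_mul_of_pos_left hexp (mul_pos hz hc)

lemma StrictAnti.finset_sum {ι α β : Type*} [Fintype ι] [Nonempty ι] [Preorder α]
    [AddCommMonoid β] [PartialOrder β] [IsOrderedCancelAddMonoid β] {g : ι → α → β}
    (hg : ∀ i, StrictAnti (g i)) : StrictAnti fun x => ∑ i, g i x :=
  fun _ _ hab => Finset.sum_lt_sum_of_nonempty Finset.univ_nonempty fun i _ => hg i hab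

lemma hasDerivAt_mul_sub_sum_exp {ι : Type*} [Fintype ι] (z c : ι → ℝ) (q0 x : ℝ) :
    HasDerivAt (fun φ => q0 * φ - ∑ j, c j * exp (-z j * φ))
      (q0 + ∑ j, z j * c j * exp (-z j * x)) x := by
  have hsum : HasDerivAt (fun φ => ∑ j, c j * exp (-z j * φ))
      (∑ j, c j * (exp (-z j * x) * (-z j))) x :=
    HasDerivAt.fun_sum fun j _ => by
      simpa using (((hasDerivAt_id x).const_mul (-z j)).exp).const_mul (c j)
  refine (((hasDerivAt_id' x).const_mul q0).sub hsum).congr_deriv ?_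
  rw [mul_one, sub_eq_add_neg, ← Finset.sum_neg_distrib]
  congr 1
  exact Finset.sum_congr rfl fun j _ => by ring

lemma StrictAnti.mul_sub_lt_sub_lt_mul_sub_of_hasDerivAt {F f : ℝ → ℝ}
    (hF : ∀ x, HasDerivAt F (f x) x) (hf : StrictAnti f) {a b : ℝ} (hab : a < b) :
    f b * (b - a) < F b - F a ∧ F b - F a < f a * (b - a) := by
  obtain ⟨ξ, ⟨haξ, hξb⟩, hslope⟩ := exists_hasDerivAt_eq_slope F f hab
    (fun x _ => (hF x).continuousAt.continuousWithinAt) (fun x _ => hF x)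
  have hba : 0 < b - a := sub_pos.2 hab
  have hmvt : F b - F a = f ξ * (b - a) := by
    rw [hslope, div_mul_cancel₀ _ hba.ne']
  rw [hmvt]
  exact ⟨mul_lt_mul_of_pos_right (hf hξb) hba, mul_lt_mul_of_pos_right (hf haξ) hba⟩

/-- If `f(α) < 0`, `σ > 0`, and `φ_s > α` satisfies `σ²/2 + F(φ_s) = F(α)`,
then `0 < σ²/(-2 f(φ_s)) < φ_s - α < σ²/(-2 f(α))`. -/
theorem stmt7 {N : ℕ} (hN : 1 ≤ N) (z c : Fin N → ℝ)
    (hz : ∀ j, z j ≠ 0) (hc : ∀ j, 0 < c j) (q0 : ℝ)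
    (f F : ℝ → ℝ)
    (hf : ∀ φ : ℝ, f φ = q0 + ∑ j, z j * c j * Real.exp (-(z j) * φ))
    (hF : ∀ φ : ℝ, F φ = q0 * φ - ∑ j, c j * Real.exp (-(z j) * φ))
    (α σ φs : ℝ) (hα : f α < 0) (hσ : 0 < σ)
    (hφs : α < φs) (heq : σ ^ 2 / 2 + F φs = F α) :
    0 < σ ^ 2 / (-(2 * f φs)) ∧
    σ ^ 2 / (-(2 * f φs)) < φs - α ∧
    φs - α < σ ^ 2 / (-(2 * f α)) := by
  have : Nonempty (Fin N) := ⟨⟨0, hN⟩⟩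
  have hf_anti : StrictAnti f := by
    rw [funext hf]
    exact (StrictAnti.finset_sum fun j => strictAnti_mul_exp_neg_mul (hz j) (hc j)).const_add q0
  have hF_deriv : ∀ x, HasDerivAt F (f x) x := fun x => by
    rw [funext hF, hf]
    exact hasDerivAt_mul_sub_sum_exp z c q0 x
  obtain ⟨hlower, hupper⟩ := hf_anti.mul_sub_lt_sub_lt_mul_sub_of_hasDerivAt hF_deriv hφs
  have hfφs : 0 < -(2 * f φs) := by linarith [hf_anti hφs]
  refine ⟨div_pos (by positivity) hfφs, ?_, ?_⟩
  · rw [div_lt_iff₀ hfφs]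
    linarith
  · rw [lt_div_iff₀ (by linarith)]
    linarith
end

section
/- Let L > 0 and 0 < σ_2 < σ_1, and suppose for k = 1, 2 that φ_k : [−L/2, L/2] → ℝ is a twice continuously differentiable solution of φ_k″ + f(φ_k) = 0 with φ_k′(−L/2) = −σ_k and φ_k′(L/2) = σ_k. Then φ_2(0) < φ_1(0); that is, the midpoint potential α = φ(0) of the symmetric Neumann problem is strictly increasing in the surface charge σ. -/
open Real Filter Set Topology

/-- A (C²) solution of the PB equation `φ'' + f(φ) = 0` on `[a, b]`, written as the
first-order planar system `φ' = u`, `u' = -f(φ)`. -/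
def IsPBSol (f : ℝ → ℝ) (a b : ℝ) (φ u : ℝ → ℝ) : Prop :=
  ∀ x ∈ Set.Icc a b,
    HasDerivWithinAt φ (u x) (Set.Icc a b) x ∧
    HasDerivWithinAt u (-(f (φ x))) (Set.Icc a b) x

/-! Let `w = φ₁ - φ₂`, so that `w' = u₁ - u₂` and `w'' = f(φ₂) - f(φ₁)`. The boundary data give
`w'(a) < 0 < w'(b)`, so `w` attains its minimum on `[a, b]` at an interior point `x₀`, where
`w'(x₀) = 0` and `w''(x₀) ≥ 0`. Since `f` is strictly decreasing (its derivative is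
`-∑ z_j² c_j e^{-z_j φ} < 0`), this forces `w(x₀) ≥ 0`. If `w(x₀) = 0`, the two solutions have the
same Cauchy data at `x₀` and coincide by uniqueness for the locally Lipschitz planar system,
contradicting `u₁(b) ≠ u₂(b)`. Hence `w > 0` on `[a, b]`, in particular at the midpoint. -/

open Finset

lemma hasDerivAt_const_add_sum_mul_exp {ι : Type*} [Fintype ι] (z c : ι → ℝ) (q0 x : ℝ) :
    HasDerivAt (fun φ => q0 + ∑ j, z j * c j * exp (-(z j) * φ))
      (-∑ j, z j ^ 2 * c j * exp (-(z j) * x)) x := by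
  have hterm (j : ι) : HasDerivAt (fun φ => z j * c j * exp (-(z j) * φ))
      (-(z j ^ 2 * c j * exp (-(z j) * x))) x := by
    refine ((((hasDerivAt_id x).const_mul (-(z j))).exp).const_mul (z j * c j)).congr_deriv ?_
    simp only [id]
    ring
  simpa only [sum_neg_distrib] using
    (HasDerivAt.fun_sum (u := univ) fun j _ => hterm j).const_add q0

lemma strictAnti_const_add_sum_mul_exp {ι : Type*} [Fintype ι] [Nonempty ι] {z c : ι → ℝ}
    (hz : ∀ j, z j ≠ 0) (hc : ∀ j, 0 < c j) (q0 : ℝ) :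
    StrictAnti fun φ => q0 + ∑ j, z j * c j * exp (-(z j) * φ) := by
  refine strictAnti_of_deriv_neg fun x => ?_
  rw [(hasDerivAt_const_add_sum_mul_exp z c q0 x).deriv, neg_lt_zero]
  exact sum_pos (fun j _ => by have := hz j; have := hc j; positivity) univ_nonempty

lemma exists_isMinOn_Icc_mem_Ioo {w w' : ℝ → ℝ} {a b : ℝ} (hab : a < b)
    (hw : ∀ x ∈ Icc a b, HasDerivWithinAt w (w' x) (Icc a b) x) (ha : w' a < 0) (hb : 0 < w' b) :
    ∃ c ∈ Ioo a b, IsMinOn w (Icc a b) c := by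
  obtain ⟨c, hc, hmin⟩ := isCompact_Icc.exists_isMinOn (nonempty_Icc.2 hab.le)
    fun x hx => (hw x hx).continuousWithinAt
  refine ⟨c, ⟨hc.1.lt_of_ne ?_, hc.2.lt_of_ne ?_⟩, hmin⟩
  · rintro rfl
    have hcone : b - a ∈ posTangentConeAt (Icc a b) a :=
      sub_mem_posTangentConeAt_of_segment_subset (segment_eq_Icc hab.le ▸ Subset.rfl)
    have := hmin.localize.hasFDerivWithinAt_nonneg (hw a hc) hcone
    simp only [ContinuousLinearMap.toSpanSingleton_apply, smul_eq_mul] at this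
    nlinarith
  · rintro rfl
    have hcone : a - c ∈ posTangentConeAt (Icc a c) c :=
      sub_mem_posTangentConeAt_of_segment_subset (by rw [segment_symm, segment_eq_Icc hab.le])
    have := hmin.localize.hasFDerivWithinAt_nonneg (hw c hc) hcone
    simp only [ContinuousLinearMap.toSpanSingleton_apply, smul_eq_mul] at this
    nlinarith

lemma IsLocalMin.secondDeriv_nonneg_of_hasDerivAt {w w' : ℝ → ℝ} {x₀ d : ℝ}
    (hmin : IsLocalMin w x₀) (hw : ∀ᶠ x in 𝓝 x₀, HasDerivAt w (w' x) x)
    (hw' : HasDerivAt w' d x₀) : 0 ≤ d := by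
  by_contra! hd
  -- otherwise the second-derivative test makes `x₀` a local maximum too, so `w` is locally
  -- constant and its second derivative vanishes
  have hderiv : deriv w =ᶠ[𝓝 x₀] w' := hw.mono fun x hx => hx.deriv
  have hderiv2 : deriv (deriv w) x₀ = d := hderiv.deriv_eq.trans hw'.deriv
  have hmax : IsLocalMax w x₀ :=
    isLocalMax_of_deriv_deriv_neg (hderiv2 ▸ hd)
      (hderiv.self_of_nhds.trans (hmin.hasDerivAt_eq_zero hw.self_of_nhds))
      hw.self_of_nhds.continuousAt
  have hconst : w =ᶠ[𝓝 x₀] fun _ => w x₀ :=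
    (hmin.and hmax).mono fun x hx => le_antisymm hx.2 hx.1
  have : deriv (deriv w) x₀ = 0 := by simpa using hconst.deriv.deriv_eq
  linarith

namespace IsPBSol

variable {f : ℝ → ℝ} {a b : ℝ} {φ₁ u₁ φ₂ u₂ : ℝ → ℝ}

lemma hasDerivWithinAt_prodMk {φ u : ℝ → ℝ} (h : IsPBSol f a b φ u) {x : ℝ} (hx : x ∈ Icc a b) :
    HasDerivWithinAt (fun t => (φ t, u t)) (u x, -f (φ x)) (Icc a b) x :=
  (h x hx).1.prodMk (h x hx).2

lemma continuousOn_prodMk {φ u : ℝ → ℝ} (h : IsPBSol f a b φ u) :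
    ContinuousOn (fun t => (φ t, u t)) (Icc a b) :=
  fun _ hx => (h.hasDerivWithinAt_prodMk hx).continuousWithinAt

lemma hasDerivWithinAt_prodMk_Ici {φ u : ℝ → ℝ} (h : IsPBSol f a b φ u) {x : ℝ}
    (hx : x ∈ Ico a b) :
    HasDerivWithinAt (fun t => (φ t, u t)) (u x, -f (φ x)) (Ici x) x :=
  (h.hasDerivWithinAt_prodMk (Ico_subset_Icc_self hx)).mono_of_mem_nhdsWithin
    (Icc_mem_nhdsGE_of_mem hx)

lemma eqOn_Icc_of_eq (hf : LocallyLipschitz f) (h₁ : IsPBSol f a b φ₁ u₁)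
    (h₂ : IsPBSol f a b φ₂ u₂) {x₀ : ℝ} (hx₀ : a ≤ x₀) (hφ : φ₁ x₀ = φ₂ x₀) (hu : u₁ x₀ = u₂ x₀) :
    EqOn (fun t => (φ₁ t, u₁ t)) (fun t => (φ₂ t, u₂ t)) (Icc x₀ b) := by
  have hg : LocallyLipschitz fun p : ℝ × ℝ => (p.2, -f p.1) :=
    LipschitzWith.prod_snd.locallyLipschitz.prodMk
      (hf.comp LipschitzWith.prod_fst.locallyLipschitz).neg
  set S := (fun t => (φ₁ t, u₁ t)) '' Icc a b ∪ (fun t => (φ₂ t, u₂ t)) '' Icc a b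
  obtain ⟨K, hK⟩ := hg.locallyLipschitzOn.exists_lipschitzOnWith_of_compact (s := S)
    ((isCompact_Icc.image_of_continuousOn h₁.continuousOn_prodMk).union
      (isCompact_Icc.image_of_continuousOn h₂.continuousOn_prodMk))
  have hsub : Ico x₀ b ⊆ Ico a b := Ico_subset_Ico_left hx₀
  exact ODE_solution_unique_of_mem_Icc_right (fun _ _ => hK)
    (h₁.continuousOn_prodMk.mono (Icc_subset_Icc_left hx₀))
    (fun t ht => h₁.hasDerivWithinAt_prodMk_Ici (hsub ht))
    (fun t ht => .inl (mem_image_of_mem _ (Ico_subset_Icc_self (hsub ht))))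
    (h₂.continuousOn_prodMk.mono (Icc_subset_Icc_left hx₀))
    (fun t ht => h₂.hasDerivWithinAt_prodMk_Ici (hsub ht))
    (fun t ht => .inr (mem_image_of_mem _ (Ico_subset_Icc_self (hsub ht))))
    (Prod.ext hφ hu)

theorem lt_on_Icc_of_boundary_lt (hanti : StrictAnti f) (hlip : LocallyLipschitz f) (hab : a < b)
    (h₁ : IsPBSol f a b φ₁ u₁) (h₂ : IsPBSol f a b φ₂ u₂) (ha : u₁ a < u₂ a) (hb : u₂ b < u₁ b) :
    ∀ x ∈ Icc a b, φ₂ x < φ₁ x := by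
  have hw : ∀ x ∈ Icc a b,
      HasDerivWithinAt (fun t => φ₁ t - φ₂ t) (u₁ x - u₂ x) (Icc a b) x :=
    fun x hx => (h₁ x hx).1.sub (h₂ x hx).1
  obtain ⟨x₀, hx₀, hmin⟩ := exists_isMinOn_Icc_mem_Ioo hab hw (by linarith) (by linarith)
  have hx₀' : x₀ ∈ Icc a b := Ioo_subset_Icc_self hx₀
  have hnhds : Icc a b ∈ 𝓝 x₀ := Icc_mem_nhds hx₀.1 hx₀.2
  have hlocmin := hmin.isLocalMin hnhds
  have hu : u₁ x₀ = u₂ x₀ :=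
    sub_eq_zero.1 (hlocmin.hasDerivAt_eq_zero ((hw x₀ hx₀').hasDerivAt hnhds))
  have hφ_le : φ₂ x₀ ≤ φ₁ x₀ := by
    have hw_nhds : ∀ᶠ x in 𝓝 x₀, HasDerivAt (fun t => φ₁ t - φ₂ t) (u₁ x - u₂ x) x := by
      filter_upwards [Ioo_mem_nhds hx₀.1 hx₀.2] with x hx
      exact (hw x (Ioo_subset_Icc_self hx)).hasDerivAt (Icc_mem_nhds hx.1 hx.2)
    have := hlocmin.secondDeriv_nonneg_of_hasDerivAt hw_nhds
      (((h₁ x₀ hx₀').2.sub (h₂ x₀ hx₀').2).hasDerivAt hnhds)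
    exact (StrictAnti.le_iff_ge hanti).1 (by linarith)
  have hφ_ne : φ₂ x₀ ≠ φ₁ x₀ := fun heq =>
    hb.ne' (congrArg Prod.snd (eqOn_Icc_of_eq hlip h₁ h₂ hx₀.1.le heq.symm hu
      ⟨hx₀.2.le, le_rfl⟩))
  intro x hx
  have : φ₁ x₀ - φ₂ x₀ ≤ φ₁ x - φ₂ x := hmin hx
  linarith [hφ_le.lt_of_ne hφ_ne]

end IsPBSol

theorem stmt9_general {N : ℕ} (hN : 1 ≤ N) (z c : Fin N → ℝ)
    (hz : ∀ j, z j ≠ 0) (hc : ∀ j, 0 < c j) (q0 : ℝ)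
    (f : ℝ → ℝ)
    (hf : ∀ φ : ℝ, f φ = q0 + ∑ j, z j * c j * Real.exp (-(z j) * φ))
    (L : ℝ) (hL : 0 < L) (σ₁ σ₂ : ℝ) (hσ : σ₂ < σ₁)
    (φ₁ u₁ φ₂ u₂ : ℝ → ℝ)
    (h₁ : IsPBSol f (-(L / 2)) (L / 2) φ₁ u₁)
    (hb₁ : u₁ (-(L / 2)) = -σ₁ ∧ u₁ (L / 2) = σ₁)
    (h₂ : IsPBSol f (-(L / 2)) (L / 2) φ₂ u₂)
    (hb₂ : u₂ (-(L / 2)) = -σ₂ ∧ u₂ (L / 2) = σ₂) :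
    φ₂ 0 < φ₁ 0 := by
  have : Nonempty (Fin N) := ⟨⟨0, hN⟩⟩
  obtain rfl : f = fun φ => q0 + ∑ j, z j * c j * exp (-(z j) * φ) := funext hf
  have hlip : LocallyLipschitz fun φ => q0 + ∑ j, z j * c j * exp (-(z j) * φ) :=
    (by fun_prop : ContDiff ℝ 1 _).locallyLipschitz
  exact IsPBSol.lt_on_Icc_of_boundary_lt (strictAnti_const_add_sum_mul_exp hz hc q0) hlip
    (by linarith) h₁ h₂ (by linarith [hb₁.1, hb₂.1]) (by linarith [hb₁.2, hb₂.2]) 0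
    ⟨by linarith, by linarith⟩

/-- The midpoint potential `α = φ(0)` of the symmetric Neumann problem is
strictly increasing in the surface charge `σ`: if `0 < σ₂ < σ₁` and `φ₁, φ₂` solve the
problem with charges `σ₁, σ₂` respectively, then `φ₂(0) < φ₁(0)`. -/
theorem stmt9 {N : ℕ} (hN : 1 ≤ N) (z c : Fin N → ℝ)
    (hz : ∀ j, z j ≠ 0) (hc : ∀ j, 0 < c j) (q0 : ℝ)
    (f : ℝ → ℝ)
    (hf : ∀ φ : ℝ, f φ = q0 + ∑ j, z j * c j * Real.exp (-(z j) * φ))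
    (L : ℝ) (hL : 0 < L) (σ₁ σ₂ : ℝ) (hσ₂ : 0 < σ₂) (hσ : σ₂ < σ₁)
    (φ₁ u₁ φ₂ u₂ : ℝ → ℝ)
    (h₁ : IsPBSol f (-(L / 2)) (L / 2) φ₁ u₁)
    (hb₁ : u₁ (-(L / 2)) = -σ₁ ∧ u₁ (L / 2) = σ₁)
    (h₂ : IsPBSol f (-(L / 2)) (L / 2) φ₂ u₂)
    (hb₂ : u₂ (-(L / 2)) = -σ₂ ∧ u₂ (L / 2) = σ₂) :
    φ₂ 0 < φ₁ 0 :=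
  stmt9_general hN z c hz hc q0 f hf L hL σ₁ σ₂ hσ φ₁ u₁ φ₂ u₂ h₁ hb₁ h₂ hb₂
end

section
/- Let σ > 0 and 0 < L_1 < L_2, and suppose for k = 1, 2 that φ_k : [−L_k/2, L_k/2] → ℝ is a twice continuously differentiable solution of φ_k″ + f(φ_k) = 0 with φ_k′(−L_k/2) = −σ and φ_k′(L_k/2) = σ. Then φ_2(0) < φ_1(0); that is, the midpoint potential α = φ(0) of the symmetric Neumann problem is strictly decreasing in the plate separation L. -/
open Real Filter Set Topology

/-!
For antitone `f` with primitive `F`, the energy `u² / 2 + F (φ)` is conserved and `F` is concave.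
By ODE uniqueness a trajectory running from `u = -σ` to `u = σ` meets no equilibrium, which forces
`f ∘ φ < 0`; so the field `u = φ'` is strictly increasing and can serve as a parameter. The time at
which `u` reaches the value `s` has derivative `1 / (-f (φ))`, where `φ` is the unique point of
`{f < 0}` with `F (φ) = E - s² / 2`. This profile is even in `s`, which puts the zero of `u` at the
midpoint, so that `E = F (φ 0)`; and it increases as `E` decreases. Hence a larger midpoint
potential makes the passage from `-σ` to `σ` faster, i.e. the interval shorter.
-/

open Function

theorem Continuous.exists_forall_hasDerivAt {f : ℝ → ℝ} (hf : Continuous f) :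
    ∃ F : ℝ → ℝ, ∀ x, HasDerivAt F (f x) x :=
  ⟨fun x => ∫ t in (0 : ℝ)..x, f t, fun x => (hf.integral_hasStrictDerivAt 0 x).hasDerivAt⟩

section Primitive

variable {f F : ℝ → ℝ}

theorem Antitone.le_add_mul_sub_of_hasDerivAt (hf : Antitone f)
    (hF : ∀ x, HasDerivAt F (f x) x) (t t' : ℝ) : F t' ≤ F t + f t * (t' - t) := by
  have hmvt : ∀ {p q : ℝ}, p < q → ∃ ξ ∈ Ioo p q, F q - F p = f ξ * (q - p) := fun hpq => by
    obtain ⟨ξ, hξ, hslope⟩ := exists_hasDerivAt_eq_slope F f hpq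
      (fun x _ => (hF x).continuousAt.continuousWithinAt) (fun x _ => hF x)
    exact ⟨ξ, hξ, by rw [hslope, div_mul_cancel₀ _ (sub_ne_zero.2 hpq.ne')]⟩
  rcases lt_trichotomy t t' with h | rfl | h
  · obtain ⟨ξ, hξ, hξF⟩ := hmvt h
    nlinarith [hf hξ.1.le]
  · simp
  · obtain ⟨ξ, hξ, hξF⟩ := hmvt h
    nlinarith [hf hξ.2.le]

theorem Antitone.le_of_hasDerivAt_of_le (hf : Antitone f) (hF : ∀ x, HasDerivAt F (f x) x)
    {t t' : ℝ} (ht : f t < 0) (h : F t ≤ F t') : t' ≤ t := by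
  by_contra! htt'
  nlinarith [hf.le_add_mul_sub_of_hasDerivAt hF t t']

end Primitive

theorem IsCompact.continuousOn_invFunOn {α β : Type*} [TopologicalSpace α] [TopologicalSpace β]
    [T2Space β] [Nonempty α] {u : α → β} {K : Set α} (hK : IsCompact K)
    (hu : ContinuousOn u K) (hinj : InjOn u K) : ContinuousOn (invFunOn u K) (u '' K) := by
  rw [continuousOn_iff_isClosed]
  intro C hC
  refine ⟨u '' (C ∩ K),
    ((hK.inter_left hC).image_of_continuousOn (hu.mono inter_subset_right)).isClosed, ?_⟩
  ext s
  constructor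
  · rintro ⟨hsC, x, hx, rfl⟩
    rw [mem_preimage, hinj.leftInvOn_invFunOn hx] at hsC
    exact ⟨⟨x, ⟨hsC, hx⟩, rfl⟩, x, hx, rfl⟩
  · rintro ⟨⟨x, ⟨hxC, hx⟩, rfl⟩, hs⟩
    refine ⟨?_, hs⟩
    rwa [mem_preimage, hinj.leftInvOn_invFunOn hx]

namespace IsPBSol

variable {f F φ u : ℝ → ℝ} {a b : ℝ}

theorem continuousOn_potential (h : IsPBSol f a b φ u) : ContinuousOn φ (Icc a b) :=
  fun x hx => (h x hx).1.continuousWithinAt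

theorem continuousOn_field (h : IsPBSol f a b φ u) : ContinuousOn u (Icc a b) :=
  fun x hx => (h x hx).2.continuousWithinAt

theorem hasDerivAt_field (h : IsPBSol f a b φ u) {x : ℝ} (hx : x ∈ Ioo a b) :
    HasDerivAt u (-f (φ x)) x :=
  (h x (Ioo_subset_Icc_self hx)).2.hasDerivAt (Icc_mem_nhds hx.1 hx.2)

theorem energy_eq (h : IsPBSol f a b φ u) (hF : ∀ x, HasDerivAt F (f x) x) {x y : ℝ}
    (hx : x ∈ Icc a b) (hy : y ∈ Icc a b) :
    u x ^ 2 / 2 + F (φ x) = u y ^ 2 / 2 + F (φ y) := by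
  have hconst : ∀ x ∈ Icc a b, u x ^ 2 / 2 + F (φ x) = u a ^ 2 / 2 + F (φ a) := by
    refine constant_of_has_deriv_right_zero
      ((h.continuousOn_field.pow 2).div_const 2 |>.add
        ((continuous_iff_continuousAt.2 fun x => (hF x).continuousAt).comp_continuousOn
          h.continuousOn_potential)) fun x hx => ?_
    have hx' := Ico_subset_Icc_self hx
    have hd := (((h x hx').2.pow 2).div_const 2).add
      ((hF (φ x)).comp_hasDerivWithinAt x (h x hx').1)
    refine (hd.congr_deriv ?_).mono_of_mem_nhdsWithin (Icc_mem_nhdsGE_of_mem hx)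
    push_cast
    ring
  rw [hconst x hx, hconst y hy]

theorem field_right_eq_zero_of_equilibrium (hf : LocallyLipschitz f) (h : IsPBSol f a b φ u)
    {y : ℝ} (hy : y ∈ Icc a b) (huy : u y = 0) (hfy : f (φ y) = 0) : u b = 0 := by
  set v : ℝ × ℝ → ℝ × ℝ := fun p => (p.2, -f p.1)
  set γ : ℝ → ℝ × ℝ := fun x => (φ x, u x)
  have hv : LocallyLipschitz v :=
    LipschitzWith.prod_snd.locallyLipschitz.prodMk
      (LipschitzWith.id.neg.locallyLipschitz.comp
        (hf.comp LipschitzWith.prod_fst.locallyLipschitz))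
  have hγ : ContinuousOn γ (Icc a b) := h.continuousOn_potential.prodMk h.continuousOn_field
  obtain ⟨K, hK⟩ := hv.locallyLipschitzOn.exists_lipschitzOnWith_of_compact
    (isCompact_Icc.image_of_continuousOn hγ)
  have hyb : Icc y b ⊆ Icc a b := Icc_subset_Icc_left hy.1
  have hsol := ODE_solution_unique_of_mem_Icc_right (v := fun _ => v) (fun _ _ => hK)
    (hγ.mono hyb)
    (fun t ht => ((h t (hyb (Ico_subset_Icc_self ht))).1.prodMk
      (h t (hyb (Ico_subset_Icc_self ht))).2).mono_of_mem_nhdsWithin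
        (Icc_mem_nhdsGE_of_mem ⟨hy.1.trans ht.1, ht.2⟩))
    (fun t ht => mem_image_of_mem γ (hyb (Ico_subset_Icc_self ht)))
    continuousOn_const
    (fun t _ => (hasDerivWithinAt_const t _ (γ y)).congr_deriv
      (by simp [v, γ, huy, hfy, Prod.zero_eq_mk]))
    (fun _ _ => mem_image_of_mem γ hy) rfl (right_mem_Icc.2 hy.2)
  simpa [γ, huy] using congrArg Prod.snd hsol

theorem f_comp_neg (hf : Antitone f) (hfl : LocallyLipschitz f) (h : IsPBSol f a b φ u)
    (hab : a ≤ b) (hua : u a ≤ 0) (hub : 0 < u b) : ∀ x ∈ Icc a b, f (φ x) < 0 := by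
  obtain ⟨F, hF⟩ := hfl.continuous.exists_forall_hasDerivAt
  obtain ⟨x₂, hx₂, hfx₂⟩ : ∃ x₂ ∈ Icc a b, f (φ x₂) < 0 := by
    have hab' : a < b := hab.lt_of_ne (by rintro rfl; linarith)
    obtain ⟨c, hc, hslope⟩ := exists_hasDerivAt_eq_slope u (fun x => -f (φ x)) hab'
      h.continuousOn_field fun x hx => h.hasDerivAt_field hx
    have : 0 < (u b - u a) / (b - a) := div_pos (by linarith) (by linarith)
    exact ⟨c, Ioo_subset_Icc_self hc, by linarith⟩
  obtain ⟨x₀, hx₀, hux₀⟩ : ∃ x₀ ∈ Icc a b, u x₀ = 0 :=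
    intermediate_value_Icc hab h.continuousOn_field ⟨hua, hub.le⟩
  intro x₁ hx₁
  by_contra! hfx₁
  obtain ⟨x₃, hx₃, hfx₃⟩ : ∃ x₃ ∈ uIcc x₁ x₂, f (φ x₃) = 0 :=
    intermediate_value_uIcc
      (hfl.continuous.comp_continuousOn (h.continuousOn_potential.mono (uIcc_subset_Icc hx₁ hx₂)))
      (mem_uIcc.2 (Or.inr ⟨hfx₂.le, hfx₁⟩))
  have hx₃' := uIcc_subset_Icc hx₁ hx₂ hx₃
  -- `F` is maximal at the zero `φ x₃` of `f`, so energy conservation forces `u x₃ = 0`.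
  have hux₃ : u x₃ = 0 := by
    have hE := h.energy_eq hF hx₃' hx₀
    have hmax := hf.le_add_mul_sub_of_hasDerivAt hF (φ x₃) (φ x₀)
    rw [hux₀, hfx₃] at *
    nlinarith [sq_nonneg (u x₃)]
  exact hub.ne' (h.field_right_eq_zero_of_equilibrium hfl hx₃' hux₃ hfx₃)

theorem strictMonoOn (h : IsPBSol f a b φ u) (hneg : ∀ x ∈ Icc a b, f (φ x) < 0) :
    StrictMonoOn u (Icc a b) :=
  strictMonoOn_of_deriv_pos (convex_Icc a b) h.continuousOn_field fun x hx => by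
    rw [interior_Icc] at hx
    rw [(h.hasDerivAt_field hx).deriv]
    linarith [hneg x (Ioo_subset_Icc_self hx)]

theorem exists_inverse_field (h : IsPBSol f a b φ u) (hab : a ≤ b)
    (hneg : ∀ x ∈ Icc a b, f (φ x) < 0) :
    ∃ X : ℝ → ℝ, ContinuousOn X (Icc (u a) (u b)) ∧ X (u a) = a ∧ X (u b) = b ∧
      (∀ s ∈ Icc (u a) (u b), X s ∈ Icc a b ∧ u (X s) = s) ∧
      ∀ s ∈ Ioo (u a) (u b), HasDerivAt X (-f (φ (X s)))⁻¹ s := by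
  have hmono := h.strictMonoOn hneg
  have himage : u '' Icc a b = Icc (u a) (u b) :=
    h.continuousOn_field.image_Icc_of_monotoneOn hab hmono.monotoneOn
  have hinv := hmono.injOn.leftInvOn_invFunOn
  have hmem : ∀ s ∈ Icc (u a) (u b), invFunOn u (Icc a b) s ∈ Icc a b ∧
      u (invFunOn u (Icc a b) s) = s := fun s hs => by
    rw [← himage] at hs
    exact ⟨invFunOn_mem hs, invFunOn_eq hs⟩
  have hcont : ContinuousOn (invFunOn u (Icc a b)) (Icc (u a) (u b)) :=
    himage ▸ isCompact_Icc.continuousOn_invFunOn h.continuousOn_field hmono.injOn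
  refine ⟨invFunOn u (Icc a b), hcont, hinv (left_mem_Icc.2 hab), hinv (right_mem_Icc.2 hab),
    hmem, fun s hs => ?_⟩
  obtain ⟨hXs, huXs⟩ := hmem s (Ioo_subset_Icc_self hs)
  have hXs' : invFunOn u (Icc a b) s ∈ Ioo a b :=
    ⟨hXs.1.lt_of_ne (by rintro he; rw [← he] at huXs; exact hs.1.ne huXs),
      hXs.2.lt_of_ne (by rintro he; rw [he] at huXs; exact hs.2.ne' huXs)⟩
  have hnhds : Icc (u a) (u b) ∈ 𝓝 s := Icc_mem_nhds hs.1 hs.2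
  refine HasDerivAt.of_local_left_inverse (hcont.continuousAt hnhds) (h.hasDerivAt_field hXs')
    (neg_ne_zero.2 (hneg _ hXs).ne) ?_
  filter_upwards [hnhds] with y hy using (hmem y hy).2

theorem field_zero_eq_zero (hf : Antitone f) (hfc : Continuous f) {ℓ σ : ℝ}
    (h : IsPBSol f (-ℓ) ℓ φ u) (hℓ : 0 ≤ ℓ) (hneg : ∀ x ∈ Icc (-ℓ) ℓ, f (φ x) < 0)
    (hσ : 0 < σ) (hua : u (-ℓ) = -σ) (hub : u ℓ = σ) : u 0 = 0 := by
  obtain ⟨F, hF⟩ := hfc.exists_forall_hasDerivAt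
  obtain ⟨X, hXc, hXa, hXb, hXmem, hXd⟩ := h.exists_inverse_field (by linarith) hneg
  simp only [hua, hub] at hXc hXa hXb hXmem hXd
  -- By energy conservation the potential at speed `s` is even in `s`.
  have heven : ∀ s ∈ Icc (-σ) σ, φ (X (-s)) = φ (X s) := by
    intro s hs
    have hs' : -s ∈ Icc (-σ) σ := ⟨neg_le_neg hs.2, by linarith [hs.1]⟩
    obtain ⟨hXs, huXs⟩ := hXmem s hs
    obtain ⟨hXs', huXs'⟩ := hXmem (-s) hs'
    have hE := h.energy_eq hF hXs hXs'
    rw [huXs, huXs', neg_sq, add_right_inj] at hE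
    exact le_antisymm (hf.le_of_hasDerivAt_of_le hF (hneg _ hXs) hE.le)
      (hf.le_of_hasDerivAt_of_le hF (hneg _ hXs') hE.ge)
  have hsub : Icc 0 σ ⊆ Icc (-σ) σ := Icc_subset_Icc_left (by linarith)
  obtain ⟨s, hs, hslope⟩ := exists_hasDerivAt_eq_slope (fun s => X s + X (-s)) (fun _ => 0) hσ
    ((hXc.mono hsub).add (hXc.comp continuousOn_neg fun s hs => ⟨neg_le_neg (hsub hs).2,
      by linarith [(hsub hs).1]⟩))
    fun s hs => by
      have hs' : s ∈ Ioo (-σ) σ := ⟨by linarith [hs.1], hs.2⟩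
      have hs'' : -s ∈ Ioo (-σ) σ := ⟨neg_lt_neg hs.2, by linarith [hs.1]⟩
      refine ((hXd s hs').add ((hXd (-s) hs'').comp s (hasDerivAt_neg s))).congr_deriv ?_
      rw [heven s (Ioo_subset_Icc_self hs')]
      ring
  have hX0 : X 0 = 0 := by
    rw [eq_div_iff (by linarith), neg_zero, hXb, hXa] at hslope
    linarith
  simpa [hX0] using (hXmem 0 ⟨by linarith, hσ.le⟩).2

theorem sub_le_sub_of_potential_le (hf : Antitone f) (hfc : Continuous f)
    {φ₁ u₁ φ₂ u₂ : ℝ → ℝ} {a₁ b₁ a₂ b₂ x₁ x₂ : ℝ}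
    (h₁ : IsPBSol f a₁ b₁ φ₁ u₁) (h₂ : IsPBSol f a₂ b₂ φ₂ u₂)
    (hab₁ : a₁ < b₁) (hab₂ : a₂ ≤ b₂) (hneg₁ : ∀ x ∈ Icc a₁ b₁, f (φ₁ x) < 0)
    (hneg₂ : ∀ x ∈ Icc a₂ b₂, f (φ₂ x) < 0) (ha : u₂ a₂ = u₁ a₁) (hb : u₂ b₂ = u₁ b₁)
    (hx₁ : x₁ ∈ Icc a₁ b₁) (hx₂ : x₂ ∈ Icc a₂ b₂) (hu : u₂ x₂ = u₁ x₁) (hφ : φ₁ x₁ ≤ φ₂ x₂) :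
    b₂ - a₂ ≤ b₁ - a₁ := by
  obtain ⟨F, hF⟩ := hfc.exists_forall_hasDerivAt
  obtain ⟨X₁, hX₁c, hX₁a, hX₁b, hX₁mem, hX₁d⟩ := h₁.exists_inverse_field hab₁.le hneg₁
  obtain ⟨X₂, hX₂c, hX₂a, hX₂b, hX₂mem, hX₂d⟩ := h₂.exists_inverse_field hab₂ hneg₂
  simp only [ha, hb] at hX₂c hX₂a hX₂b hX₂mem hX₂d
  -- At every speed `s` the second solution has the lower energy, hence the larger potential.
  have hprofile : ∀ s ∈ Icc (u₁ a₁) (u₁ b₁), φ₁ (X₁ s) ≤ φ₂ (X₂ s) := by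
    intro s hs
    obtain ⟨hX₁s, hu₁X₁s⟩ := hX₁mem s hs
    obtain ⟨hX₂s, hu₂X₂s⟩ := hX₂mem s hs
    have hE₁ := h₁.energy_eq hF hX₁s hx₁
    have hE₂ := h₂.energy_eq hF hX₂s hx₂
    have htangent := hf.le_add_mul_sub_of_hasDerivAt hF (φ₁ x₁) (φ₂ x₂)
    have hdrop : f (φ₁ x₁) * (φ₂ x₂ - φ₁ x₁) ≤ 0 :=
      mul_nonpos_of_nonpos_of_nonneg (hneg₁ x₁ hx₁).le (sub_nonneg.2 hφ)
    rw [hu₁X₁s] at hE₁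
    rw [hu₂X₂s, hu] at hE₂
    exact hf.le_of_hasDerivAt_of_le hF (hneg₂ _ hX₂s) (by linarith)
  obtain ⟨s, hs, hslope⟩ := exists_hasDerivAt_eq_slope (fun s => X₂ s - X₁ s)
    (fun s => (-f (φ₂ (X₂ s)))⁻¹ - (-f (φ₁ (X₁ s)))⁻¹) (h₁.strictMonoOn hneg₁
      (left_mem_Icc.2 hab₁.le) (right_mem_Icc.2 hab₁.le) hab₁) (hX₂c.sub hX₁c)
    fun s hs => (hX₂d s hs).sub (hX₁d s hs)
  have hrate : (-f (φ₂ (X₂ s)))⁻¹ ≤ (-f (φ₁ (X₁ s)))⁻¹ :=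
    inv_anti₀ (neg_pos.2 (hneg₁ _ (hX₁mem s (Ioo_subset_Icc_self hs)).1))
      (neg_le_neg (hf (hprofile s (Ioo_subset_Icc_self hs))))
  rw [hX₂a, hX₂b, hX₁a, hX₁b] at hslope
  have hpos : 0 < u₁ b₁ - u₁ a₁ := by linarith [hs.1, hs.2]
  rw [eq_div_iff hpos.ne'] at hslope
  nlinarith

end IsPBSol

theorem antitone_mul_exp_neg_mul {z c : ℝ} (hc : 0 ≤ c) :
    Antitone fun φ : ℝ => z * c * Real.exp (-z * φ) := by
  have hd : ∀ φ : ℝ, HasDerivAt (fun φ : ℝ => z * c * Real.exp (-z * φ))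
      (-(z ^ 2 * c * Real.exp (-z * φ))) φ := fun φ =>
    (((hasDerivAt_id φ).const_mul (-z)).exp.const_mul (z * c)).congr_deriv (by simp; ring)
  refine antitone_of_deriv_nonpos (fun φ => (hd φ).differentiableAt) fun φ => ?_
  rw [(hd φ).deriv, neg_nonpos]
  positivity

theorem stmt10_general {N : ℕ} (z c : Fin N → ℝ)
    (hc : ∀ j, 0 < c j) (q0 : ℝ)
    (f : ℝ → ℝ)
    (hf : ∀ φ : ℝ, f φ = q0 + ∑ j, z j * c j * Real.exp (-(z j) * φ))
    (σ : ℝ) (hσ : 0 < σ) (L₁ L₂ : ℝ) (hL₁ : 0 < L₁) (hL : L₁ < L₂)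
    (φ₁ u₁ φ₂ u₂ : ℝ → ℝ)
    (h₁ : IsPBSol f (-(L₁ / 2)) (L₁ / 2) φ₁ u₁)
    (hb₁ : u₁ (-(L₁ / 2)) = -σ ∧ u₁ (L₁ / 2) = σ)
    (h₂ : IsPBSol f (-(L₂ / 2)) (L₂ / 2) φ₂ u₂)
    (hb₂ : u₂ (-(L₂ / 2)) = -σ ∧ u₂ (L₂ / 2) = σ) :
    φ₂ 0 < φ₁ 0 := by
  have hanti : Antitone f := fun x y hxy => by
    rw [hf, hf]
    exact add_le_add le_rfl
      (Finset.sum_le_sum fun j _ => antitone_mul_exp_neg_mul (hc j).le hxy)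
  have hlip : LocallyLipschitz f := by
    have : ContDiff ℝ 1 f := by rw [funext hf]; fun_prop
    exact this.locallyLipschitz
  have hneg₁ := h₁.f_comp_neg hanti hlip (by linarith) (by rw [hb₁.1]; linarith)
    (by rw [hb₁.2]; exact hσ)
  have hneg₂ := h₂.f_comp_neg hanti hlip (by linarith) (by rw [hb₂.1]; linarith)
    (by rw [hb₂.2]; exact hσ)
  have hu₁ := h₁.field_zero_eq_zero hanti hlip.continuous (by linarith) hneg₁ hσ hb₁.1 hb₁.2
  have hu₂ := h₂.field_zero_eq_zero hanti hlip.continuous (by linarith) hneg₂ hσ hb₂.1 hb₂.2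
  by_contra! hφ
  have hlen := h₁.sub_le_sub_of_potential_le hanti hlip.continuous h₂ (by linarith) (by linarith)
    hneg₁ hneg₂ (hb₂.1.trans hb₁.1.symm) (hb₂.2.trans hb₁.2.symm) ⟨by linarith, by linarith⟩
    ⟨by linarith, by linarith⟩ (hu₂.trans hu₁.symm) hφ
  linarith

/-- The midpoint potential `α = φ(0)` of the symmetric Neumann problem is
strictly decreasing in the plate separation `L`: if `σ > 0`, `0 < L₁ < L₂` and `φ₁, φ₂`
solve the problem on `[-L₁/2, L₁/2]`, `[-L₂/2, L₂/2]` respectively, then `φ₂(0) < φ₁(0)`. -/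
theorem stmt10 {N : ℕ} (hN : 1 ≤ N) (z c : Fin N → ℝ)
    (hz : ∀ j, z j ≠ 0) (hc : ∀ j, 0 < c j) (q0 : ℝ)
    (f : ℝ → ℝ)
    (hf : ∀ φ : ℝ, f φ = q0 + ∑ j, z j * c j * Real.exp (-(z j) * φ))
    (σ : ℝ) (hσ : 0 < σ) (L₁ L₂ : ℝ) (hL₁ : 0 < L₁) (hL : L₁ < L₂)
    (φ₁ u₁ φ₂ u₂ : ℝ → ℝ)
    (h₁ : IsPBSol f (-(L₁ / 2)) (L₁ / 2) φ₁ u₁)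
    (hb₁ : u₁ (-(L₁ / 2)) = -σ ∧ u₁ (L₁ / 2) = σ)
    (h₂ : IsPBSol f (-(L₂ / 2)) (L₂ / 2) φ₂ u₂)
    (hb₂ : u₂ (-(L₂ / 2)) = -σ ∧ u₂ (L₂ / 2) = σ) :
    φ₂ 0 < φ₁ 0 :=
  stmt10_general z c hc q0 f hf σ hσ L₁ L₂ hL₁ hL φ₁ u₁ φ₂ u₂ h₁ hb₁ h₂ hb₂
end
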